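/- Under the one-step contraction E[F(ω^{τ+1})] − F* ≤ (1 − 2ρφ₂)(F(ω^τ) − F*) + φ₁ with 0 < 2ρφ₂ < 1, the asymptotic optimality gap satisfies limsup_{τ→∞} (F(ω^τ) − F*) ≤ φ₁/(2ρφ₂). Moreover, with η = 1/L_c, φ₁/(2ρφ₂) ≤ (1/(2ρ)) · ∑_m A²κ₁ D_m² ζ_m/(D² I_m) / (2 − A²κ₂ ∑_m D_m²ζ_m/(D² I_m)), which is proportional to ∑_m D_m² ζ_m/(D² I_m) when A²κ₂ ∑_m D_m²ζ_m/(D²I_m) is bounded away from 2. -/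

import Mathlib

/-!
Subtracting the fixed point `L = φ₁ / (2ρφ₂)` of the affine map `x ↦ (1 - 2ρφ₂) x + φ₁` turns the
one-step contraction into `e τ - L ≤ (1 - 2ρφ₂)^τ (e 0 - L)`, and the right side tends to `0`.
With `η = 1 / L_c` both `φ₁` and `φ₂` carry the common factor `1 / (2 L_c)`, which cancels in the
ratio `φ₁ / (2ρφ₂)`; so the second bound even holds with equality.
-/

open Filter

section AffineContraction

variable {u : ℕ → ℝ} {q b L : ℝ}

theorem le_add_pow_mul_sub_of_le_mul_add (hq : 0 ≤ q) (hL : q * L + b = L)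
    (hu : ∀ n, u (n + 1) ≤ q * u n + b) (n : ℕ) : u n ≤ L + q ^ n * (u 0 - L) := by
  induction n with
  | zero => simp
  | succ n ih =>
    calc u (n + 1) ≤ q * u n + b := hu n
      _ ≤ q * (L + q ^ n * (u 0 - L)) + b := by gcongr
      _ = L + q ^ (n + 1) * (u 0 - L) := by rw [pow_succ]; linear_combination hL

theorem limsup_le_div_one_sub_of_le_mul_add (hq₀ : 0 ≤ q) (hq₁ : q < 1)
    (hbdd : BddBelow (Set.range u)) (hu : ∀ n, u (n + 1) ≤ q * u n + b) :
    limsup u atTop ≤ b / (1 - q) := by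
  set L := b / (1 - q)
  have hL : q * L + b = L := by
    have h : 1 - q ≠ 0 := (sub_pos.2 hq₁).ne'
    simp only [L]
    field_simp
    ring
  have hlim : Tendsto (fun n => L + q ^ n * (u 0 - L)) atTop (nhds L) := by
    simpa using ((tendsto_pow_atTop_nhds_zero_of_lt_one hq₀ hq₁).mul_const (u 0 - L)).const_add L
  obtain ⟨a, ha⟩ := hbdd
  calc limsup u atTop ≤ limsup (fun n => L + q ^ n * (u 0 - L)) atTop :=
        limsup_le_limsup (.of_forall (le_add_pow_mul_sub_of_le_mul_add hq₀ hL hu))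
          (isCoboundedUnder_le_of_le atTop fun n => ha ⟨n, rfl⟩) hlim.isBoundedUnder_le
    _ = L := hlim.limsup_eq

end AffineContraction

theorem div_two_mul_eq_of_stepsize_eq_one_div {Lc η ρ X Y φ₁ φ₂ : ℝ} (hLc : Lc ≠ 0)
    (hη : η = 1 / Lc) (hφ₁ : φ₁ = η ^ 2 * Lc / 2 * X)
    (hφ₂ : φ₂ = η - η ^ 2 * Lc / 2 * Y) :
    φ₁ / (2 * ρ * φ₂) = 1 / (2 * ρ) * X / (2 - Y) := by
  have h₁ : φ₁ = X / (2 * Lc) := by rw [hφ₁, hη]; field_simp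
  have h₂ : 2 * ρ * φ₂ = 2 * ρ * (2 - Y) / (2 * Lc) := by rw [hφ₂, hη]; field_simp
  rw [h₁, h₂, div_div_div_cancel_right₀ (by positivity), one_div_mul_eq_div, div_div]

theorem stmt_13_general (e : ℕ → ℝ) (ρ φ₁ φ₂ : ℝ)
    (Lc η A κ₁ κ₂ : ℝ) (S : ℝ)
    (he0 : ∀ τ, 0 ≤ e τ)
    (hrec : ∀ τ, e (τ + 1) ≤ (1 - 2 * ρ * φ₂) * e τ + φ₁)
    (hc0 : 0 < 2 * ρ * φ₂) (hc1 : 2 * ρ * φ₂ < 1)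
    (hLc : 0 < Lc) (hη : η = 1 / Lc)
    (hφ₁def : φ₁ = η ^ 2 * Lc / 2 * (A ^ 2 * κ₁ * S))
    (hφ₂def : φ₂ = η - η ^ 2 * Lc / 2 * (A ^ 2 * κ₂ * S)) :
    limsup e atTop ≤ φ₁ / (2 * ρ * φ₂) ∧
      φ₁ / (2 * ρ * φ₂) ≤ 1 / (2 * ρ) * (A ^ 2 * κ₁ * S) / (2 - A ^ 2 * κ₂ * S) := by
  refine ⟨?_, (div_two_mul_eq_of_stepsize_eq_one_div hLc.ne' hη hφ₁def hφ₂def).le⟩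
  have hlimsup := limsup_le_div_one_sub_of_le_mul_add (by linarith) (by linarith)
    ⟨0, by rintro _ ⟨τ, rfl⟩; exact he0 τ⟩ hrec
  rwa [sub_sub_cancel] at hlimsup

theorem stmt_13 {M : Type*} [Fintype M] (e : ℕ → ℝ) (ρ φ₁ φ₂ : ℝ)
    (Lc η A κ₁ κ₂ Dtot : ℝ) (ζ D I : M → ℝ) (S : ℝ)
    (hρ : 0 < ρ) (hφ₁ : 0 ≤ φ₁)
    (he0 : ∀ τ, 0 ≤ e τ)
    (hrec : ∀ τ, e (τ + 1) ≤ (1 - 2 * ρ * φ₂) * e τ + φ₁)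
    (hc0 : 0 < 2 * ρ * φ₂) (hc1 : 2 * ρ * φ₂ < 1)
    (hLc : 0 < Lc) (hη : η = 1 / Lc) (hκ₁ : 0 ≤ κ₁) (hκ₂ : 0 ≤ κ₂)
    (hζ : ∀ m, ζ m = 0 ∨ ζ m = 1) (hI : ∀ m, 1 ≤ I m) (hD : ∀ m, 0 < D m)
    (hDtot : 0 < Dtot)
    (hS : S = ∑ m, (D m) ^ 2 * ζ m / (Dtot ^ 2 * I m))
    (hφ₁def : φ₁ = η ^ 2 * Lc / 2 * (A ^ 2 * κ₁ * S))
    (hφ₂def : φ₂ = η - η ^ 2 * Lc / 2 * (A ^ 2 * κ₂ * S))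
    (hbdd : A ^ 2 * κ₂ * S < 2) :
    limsup e atTop ≤ φ₁ / (2 * ρ * φ₂) ∧
      φ₁ / (2 * ρ * φ₂) ≤ 1 / (2 * ρ) * (A ^ 2 * κ₁ * S) / (2 - A ^ 2 * κ₂ * S) :=
  stmt_13_general e ρ φ₁ φ₂ Lc η A κ₁ κ₂ S he0 hrec hc0 hc1 hLc hη hφ₁def hφ₂def
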